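/- Non-expansiveness of the Nash value map at saddle points: let Q^i and Q̃^i : (∏_j A_j) → ℝ be two payoff arrays for player i in two finite games Q and Q̃, let x be a saddle-point Nash equilibrium of Q and let x̃ be a saddle-point Nash equilibrium of Q̃. Then |C_Q^i(x) − C_{Q̃}^i(x̃)| ≤ max_{a ∈ ∏_j A_j} |Q^i(a) − Q̃^i(a)|, where C_Q^i(x) = ∑_a (∏_j x_j(a_j))·Q^i(a) and similarly for Q̃. -/
import Mathlib


open Finset

noncomputable section

variable {I : Type*} [Fintype I] [DecidableEq I] {A : I → Type*} [∀ i, Fintype (A i)]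

/-- `x` is a mixed multi-strategy: each component lies in the simplex `Δ(A_i)`. -/
def IsMixed (x : ∀ i, A i → ℝ) : Prop :=
  ∀ i, (∀ a, 0 ≤ x i a) ∧ ∑ a, x i a = 1

/-- Expected cost of a payoff array `Q` under the mixed multi-strategy `x`. -/
def expCost (Q : (∀ j, A j) → ℝ) (x : ∀ i, A i → ℝ) : ℝ :=
  ∑ a : ∀ j, A j, (∏ j, x j (a j)) * Q a

/-- `x` is a Nash equilibrium of the game with cost functions `Q`. -/
def IsNash (Q : ∀ _ : I, (∀ j, A j) → ℝ) (x : ∀ i, A i → ℝ) : Prop :=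
  IsMixed x ∧ ∀ i, ∀ u : A i → ℝ, ((∀ a, 0 ≤ u a) ∧ ∑ a, u a = 1) →
    expCost (Q i) x ≤ expCost (Q i) (Function.update x i u)

/-- `x` is a saddle point of the game `Q`: a Nash equilibrium at which each
player receives a weakly lower cost whenever only the other players deviate. -/
def IsSaddle (Q : ∀ _ : I, (∀ j, A j) → ℝ) (x : ∀ i, A i → ℝ) : Prop :=
  IsNash Q x ∧ ∀ i, ∀ z : ∀ i, A i → ℝ, IsMixed z → z i = x i →
    expCost (Q i) z ≤ expCost (Q i) x

lemma isMixed_update {x : ∀ i, A i → ℝ} (hx : IsMixed x) (i : I) (u : A i → ℝ)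
    (hu : (∀ a, 0 ≤ u a) ∧ ∑ a, u a = 1) : IsMixed (Function.update x i u) := by
  intro j
  rcases eq_or_ne j i with rfl | h
  · simpa using hu
  · simpa [Function.update_of_ne h] using hx j

lemma abs_expCost_sub_expCost_le [Nonempty I] [∀ i, Nonempty (A i)]
    (Q Qt : (∀ j, A j) → ℝ) {z : ∀ i, A i → ℝ} (hz : IsMixed z) :
    |expCost Q z - expCost Qt z| ≤ ⨆ a : ∀ j, A j, |Q a - Qt a| := by
  have hbdd : BddAbove (Set.range fun a : ∀ j, A j => |Q a - Qt a|) :=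
    Set.Finite.bddAbove (Set.finite_range _)
  have key : expCost Q z - expCost Qt z = ∑ a : ∀ j, A j, (∏ j, z j (a j)) * (Q a - Qt a) := by
    simp [expCost, mul_sub, Finset.sum_sub_distrib]
  have hsum1 : ∑ a : ∀ j, A j, (∏ j, z j (a j)) = 1 := by
    have := Finset.prod_univ_sum (fun i : I => (univ : Finset (A i)))
      (fun i a => z i a)
    simp only [Fintype.piFinset_univ] at this
    rw [← this]
    simp [(fun j => (hz j).2)]
  calc |expCost Q z - expCost Qt z|
      ≤ ∑ a : ∀ j, A j, |(∏ j, z j (a j)) * (Q a - Qt a)| := by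
        rw [key]; exact Finset.abs_sum_le_sum_abs _ _
    _ ≤ ∑ a : ∀ j, A j, (∏ j, z j (a j)) * (⨆ b : ∀ j, A j, |Q b - Qt b|) := by
        refine Finset.sum_le_sum fun a _ => ?_
        rw [abs_mul, abs_of_nonneg (Finset.prod_nonneg fun j _ => (hz j).1 _)]
        exact mul_le_mul_of_nonneg_left (le_ciSup hbdd a)
          (Finset.prod_nonneg fun j _ => (hz j).1 _)
    _ = ⨆ b : ∀ j, A j, |Q b - Qt b| := by
        rw [← Finset.sum_mul, hsum1, one_mul]

/-- non-expansiveness of the Nash value map at saddle points: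
`|C_Q^i(x) − C_{Q̃}^i(x̃)| ≤ max_a |Q^i(a) − Q̃^i(a)|`. -/
theorem abs_expCost_sub_expCost_le_of_saddle
    {I : Type*} [Fintype I] [DecidableEq I] [Nonempty I]
    {A : I → Type*} [∀ i, Fintype (A i)] [∀ i, Nonempty (A i)]
    (Q Qt : ∀ _ : I, (∀ j, A j) → ℝ) (x xt : ∀ i, A i → ℝ)
    (hx : IsSaddle Q x) (hxt : IsSaddle Qt xt) (i : I) :
    |expCost (Q i) x - expCost (Qt i) xt| ≤ ⨆ a : ∀ j, A j, |Q i a - Qt i a| := by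
  obtain ⟨⟨hxm, hxn⟩, hxs⟩ := hx
  obtain ⟨⟨hxtm, hxtn⟩, hxts⟩ := hxt
  rw [abs_sub_le_iff]
  constructor
  · -- y' = update x i (xt i)
    set y := Function.update x i (xt i) with hy
    have hym : IsMixed y := isMixed_update hxm i (xt i) (hxtm i)
    have h1 : expCost (Q i) x ≤ expCost (Q i) y := hxn i (xt i) (hxtm i)
    have h2 : expCost (Qt i) y ≤ expCost (Qt i) xt := by
      refine hxts i y hym ?_
      simp [hy]
    calc expCost (Q i) x - expCost (Qt i) xt
        ≤ expCost (Q i) y - expCost (Qt i) y := by linarith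
      _ ≤ |expCost (Q i) y - expCost (Qt i) y| := le_abs_self _
      _ ≤ _ := abs_expCost_sub_expCost_le _ _ hym
  · set y := Function.update xt i (x i) with hy
    have hym : IsMixed y := isMixed_update hxtm i (x i) (hxm i)
    have h1 : expCost (Qt i) xt ≤ expCost (Qt i) y := hxtn i (x i) (hxm i)
    have h2 : expCost (Q i) y ≤ expCost (Q i) x := by
      refine hxs i y hym ?_
      simp [hy]
    calc expCost (Qt i) xt - expCost (Q i) x
        ≤ expCost (Qt i) y - expCost (Q i) y := by linarith
      _ ≤ |expCost (Q i) y - expCost (Qt i) y| := by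
          rw [abs_sub_comm]; exact le_abs_self _
      _ ≤ _ := abs_expCost_sub_expCost_le _ _ hym
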